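/- arXiv:2111.06759 — 2 statements merged into one kernel-verified Lean document; each statement's English description precedes it below -/
import Mathlib

section
/- Under the setup of the auxiliary-dynamics proposition with strict pre-impact velocity n(q_s)^⊤ v_s < 0, the endpoint velocity of the auxiliary ODE satisfies v(τ_r) = v_s − M(q_s)^{-1} n(q_s) D(q_s)^{-1} (n(q_s)^⊤ v_s). Moreover, v(τ_r) is the unique vector of the form v_s + M(q_s)^{-1} n(q_s) Λ with Λ ∈ ℝ such that n(q_s)^⊤ (v_s + M(q_s)^{-1} n(q_s) Λ) = 0, and this impulse satisfies Λ = ∫_{τ_s}^{τ_r} a_n dτ = −(n(q_s)^⊤ v_s)/D(q_s) > 0. That is, the auxiliary dynamics reproduces exactly the inelastic impact law with the correct contact impulse (Theorem 2, Part IV of the paper). -/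
open Matrix

/-! The auxiliary dynamics freezes `q`, so the right-hand side of `v' = aₙ M(q)⁻¹ n(q)` is the
constant `aₙ M(q_s)⁻¹ n(q_s)` and `v` is affine in `τ`. After the time `τ_jump` it has moved by
`τ_jump aₙ M(q_s)⁻¹ n(q_s) = Λ M(q_s)⁻¹ n(q_s)` with `Λ = -(n(q_s)ᵀ v_s)/D(q_s)`, which is the
unique multiplier making the normal velocity `n(q_s)ᵀ v` vanish because `D(q_s) > 0`. -/

section ConstantDerivative

variable {E : Type*} [NormedAddCommGroup E] [NormedSpace ℝ E] {f : ℝ → E} {c : E} {a b : ℝ}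

theorem eq_add_smul_of_hasDerivWithinAt_Icc
    (hf : ∀ x ∈ Set.Icc a b, HasDerivWithinAt f c (Set.Icc a b) x) :
    ∀ x ∈ Set.Icc a b, f x = f a + (x - a) • c := by
  have hline : ∀ x, HasDerivAt (fun y : ℝ => f a + (y - a) • c) c x := fun x => by
    simpa using (((hasDerivAt_id x).sub_const a).smul_const c).const_add (f a)
  refine eq_of_has_deriv_right_eq (f' := fun _ => c)
    (fun x hx => (hf x (Set.mem_Icc_of_Ico hx)).mono_of_mem_nhdsWithin
      (Icc_mem_nhdsGE_of_mem hx))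
    (fun x _ => (hline x).hasDerivWithinAt)
    (fun x hx => (hf x hx).continuousWithinAt)
    (fun x _ => (hline x).continuousAt.continuousWithinAt) (by simp)

theorem eq_of_hasDerivWithinAt_zero_Icc
    (hf : ∀ x ∈ Set.Icc a b, HasDerivWithinAt f 0 (Set.Icc a b) x) :
    ∀ x ∈ Set.Icc a b, f x = f a := by
  simpa using eq_add_smul_of_hasDerivWithinAt_Icc hf

end ConstantDerivative

theorem Matrix.PosDef.dotProduct_inv_mulVec_pos {ι : Type*} [Fintype ι] [DecidableEq ι]
    {A : Matrix ι ι ℝ} (hA : A.PosDef) {x : ι → ℝ} (hx : x ≠ 0) :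
    0 < x ⬝ᵥ (A⁻¹ *ᵥ x) := by
  simpa using hA.inv.dotProduct_mulVec_pos hx

theorem dotProduct_add_smul_eq_zero_iff {ι K : Type*} [Fintype ι] [Field K]
    {n v w : ι → K} (hw : n ⬝ᵥ w ≠ 0) (Λ : K) :
    n ⬝ᵥ (v + Λ • w) = 0 ↔ Λ = -(n ⬝ᵥ v) / (n ⬝ᵥ w) := by
  rw [dotProduct_add, dotProduct_smul, smul_eq_mul, eq_div_iff hw]
  constructor <;> intro h <;> linear_combination h

theorem stmt_2_general (nq : ℕ)
    (n : (Fin nq → ℝ) → Fin nq → ℝ)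
    (M : (Fin nq → ℝ) → Matrix (Fin nq) (Fin nq) ℝ)
    (hM : ∀ p, (M p).PosDef)
    (D : (Fin nq → ℝ) → ℝ)
    (hD : ∀ p, D p = n p ⬝ᵥ ((M p)⁻¹ *ᵥ n p))
    (qs vs : Fin nq → ℝ) (hnqs : n qs ≠ 0)
    (hvs : n qs ⬝ᵥ vs < 0)
    (τs an : ℝ) (han : 0 < an)
    (τjump : ℝ) (hτjump : τjump = -(n qs ⬝ᵥ vs) / (D qs * an))
    (τr : ℝ) (hτr : τr = τs + τjump)
    (q v : ℝ → Fin nq → ℝ)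
    (hq : ∀ τ ∈ Set.Icc τs τr, HasDerivWithinAt q (0 : Fin nq → ℝ) (Set.Icc τs τr) τ)
    (hv : ∀ τ ∈ Set.Icc τs τr,
      HasDerivWithinAt v (an • ((M (q τ))⁻¹ *ᵥ n (q τ))) (Set.Icc τs τr) τ)
    (hq0 : q τs = qs) (hv0 : v τs = vs) :
    v τr = vs - ((n qs ⬝ᵥ vs) / D qs) • ((M qs)⁻¹ *ᵥ n qs) ∧
    (∀ Λ : ℝ, n qs ⬝ᵥ (vs + Λ • ((M qs)⁻¹ *ᵥ n qs)) = 0 ↔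
      Λ = -(n qs ⬝ᵥ vs) / D qs) ∧
    (∫ _τ in τs..τr, an) = -(n qs ⬝ᵥ vs) / D qs ∧
    0 < -(n qs ⬝ᵥ vs) / D qs := by
  have hD_pos : 0 < D qs := hD qs ▸ (hM qs).dotProduct_inv_mulVec_pos hnqs
  have hjump_pos : 0 < τjump := hτjump ▸ div_pos (by linarith) (by positivity)
  have himpulse : τjump * an = -(n qs ⬝ᵥ vs) / D qs := by
    rw [hτjump]; field_simp
  have hr_mem : τr ∈ Set.Icc τs τr := Set.right_mem_Icc.2 (by linarith)
  have hq_const := eq_of_hasDerivWithinAt_zero_Icc hq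
  have hv_affine := eq_add_smul_of_hasDerivWithinAt_Icc (c := an • ((M qs)⁻¹ *ᵥ n qs))
    fun τ hτ => by simpa [hq_const τ hτ, hq0] using hv τ hτ
  refine ⟨?_, fun Λ => hD qs ▸ dotProduct_add_smul_eq_zero_iff (hD qs ▸ hD_pos.ne') Λ, ?_,
    div_pos (by linarith) hD_pos⟩
  · rw [hv_affine τr hr_mem, hv0, smul_smul, hτr, add_sub_cancel_left, himpulse, neg_div,
      neg_smul, sub_eq_add_neg]
  · rw [intervalIntegral.integral_const, hτr, add_sub_cancel_left, smul_eq_mul, himpulse]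

/-- Under the setup of the auxiliary-dynamics proposition with strict pre-impact
velocity `n(q_s)ᵀ v_s < 0`, the endpoint velocity of the auxiliary ODE is
`v(τ_r) = v_s - M(q_s)⁻¹ n(q_s) D(q_s)⁻¹ (n(q_s)ᵀ v_s)`; it is the unique vector
of the form `v_s + M(q_s)⁻¹ n(q_s) Λ` with vanishing post-impact normal velocity,
and the impulse satisfies `Λ = ∫_{τ_s}^{τ_r} aₙ dτ = -(n(q_s)ᵀ v_s)/D(q_s) > 0`. -/
theorem stmt_2 (nq : ℕ) (hnq : 0 < nq)
    (fc : (Fin nq → ℝ) → ℝ) (hfc : ContDiff ℝ 2 fc)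
    (n : (Fin nq → ℝ) → Fin nq → ℝ)
    (hn : ∀ p w, fderiv ℝ fc p w = n p ⬝ᵥ w)
    (M : (Fin nq → ℝ) → Matrix (Fin nq) (Fin nq) ℝ)
    (hM : ∀ p, (M p).PosDef)
    (D : (Fin nq → ℝ) → ℝ)
    (hD : ∀ p, D p = n p ⬝ᵥ ((M p)⁻¹ *ᵥ n p))
    (qs vs : Fin nq → ℝ) (hfcqs : fc qs = 0) (hnqs : n qs ≠ 0)
    (hvs : n qs ⬝ᵥ vs < 0)
    (ts τs an : ℝ) (han : 0 < an)
    (τjump : ℝ) (hτjump : τjump = -(n qs ⬝ᵥ vs) / (D qs * an))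
    (τr : ℝ) (hτr : τr = τs + τjump)
    (q v : ℝ → Fin nq → ℝ) (t : ℝ → ℝ)
    (hq : ∀ τ ∈ Set.Icc τs τr, HasDerivWithinAt q (0 : Fin nq → ℝ) (Set.Icc τs τr) τ)
    (hv : ∀ τ ∈ Set.Icc τs τr,
      HasDerivWithinAt v (an • ((M (q τ))⁻¹ *ᵥ n (q τ))) (Set.Icc τs τr) τ)
    (ht : ∀ τ ∈ Set.Icc τs τr, HasDerivWithinAt t (0 : ℝ) (Set.Icc τs τr) τ)
    (hq0 : q τs = qs) (hv0 : v τs = vs) (ht0 : t τs = ts) :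
    v τr = vs - ((n qs ⬝ᵥ vs) / D qs) • ((M qs)⁻¹ *ᵥ n qs) ∧
    (∀ Λ : ℝ, n qs ⬝ᵥ (vs + Λ • ((M qs)⁻¹ *ᵥ n qs)) = 0 ↔
      Λ = -(n qs ⬝ᵥ vs) / D qs) ∧
    (∫ _τ in τs..τr, an) = -(n qs ⬝ᵥ vs) / D qs ∧
    0 < -(n qs ⬝ᵥ vs) / D qs :=
  stmt_2_general nq n M hM D hD qs vs hnqs hvs τs an han τjump hτjump τr hτr q v hq hv hq0 hv0
end

section
/- Contact breaking: Let u : [0, ε₀] → ℝ^{n_u} and y = (q, v, t) : [0, ε₀] → ℝ^{n_q} × ℝ^{n_q} × ℝ be such that y is differentiable and solves the unconstrained time-freezing dynamics q'(τ) = v(τ), v'(τ) = f_v(q(τ), v(τ), u(τ)), t'(τ) = 1, with the map τ ↦ φ(x(τ), u(τ)) continuous. Suppose the initial point lies on the switching surface, i.e., f_c(q(0)) = 0 and n(q(0))^⊤ v(0) = 0, and that φ(x(0), u(0)) > 0. Then there exists ε ∈ (0, ε₀] such that for all τ ∈ (0, ε): n(q(τ))^⊤ v(τ) > 0 and f_c(q(τ))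 > 0. That is, when φ > 0 the trajectory immediately leaves the surface Σ into the region where the constraint is strictly satisfied (the contact breaks). -/
open Matrix

/-!
Along the trajectory, `g τ := n(q τ) ⬝ᵥ v τ` is the derivative of `fc ∘ q`, and the
derivative of `g` is `φ(x τ, u τ)`. Since `φ` is continuous and positive at `0`, it stays
positive on some `(0, ε)`, so `g` increases strictly from `g 0 = 0`; hence `g > 0` there,
and then `fc ∘ q` increases strictly from `fc (q 0) = 0`.
-/

open Set

lemma exists_Ioc_forall_Ico_pos_of_continuousWithinAt {f : ℝ → ℝ} {a b : ℝ} (hab : a < b)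
    (hf : ContinuousWithinAt f (Icc a b) a) (ha : 0 < f a) :
    ∃ c ∈ Ioc a b, ∀ x ∈ Ico a c, 0 < f x := by
  have hev : {x | 0 < f x} ∈ nhdsWithin a (Ici a) :=
    nhdsWithin_Icc_eq_nhdsGE hab ▸ hf.eventually (eventually_gt_nhds ha)
  obtain ⟨c, hac, hc⟩ := mem_nhdsGE_iff_exists_Ico_subset.1 hev
  exact ⟨min c b, ⟨lt_min hac hab, min_le_right c b⟩,
    fun x hx => hc ⟨hx.1, hx.2.trans_le (min_le_left c b)⟩⟩

lemma pos_of_hasDerivWithinAt_pos_of_left_eq_zero {f f' : ℝ → ℝ} {a b : ℝ} {s : Set ℝ}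
    (hs : Icc a b ⊆ s) (hf : ∀ x ∈ Icc a b, HasDerivWithinAt f (f' x) s x)
    (hf' : ∀ x ∈ Ioo a b, 0 < f' x) (ha : f a = 0) :
    ∀ x ∈ Ioc a b, 0 < f x := by
  have hmono : StrictMonoOn f (Icc a b) := by
    refine strictMonoOn_of_hasDerivWithinAt_pos (convex_Icc a b)
      (fun x hx => (hf x hx).continuousWithinAt.mono hs) (fun x hx => ?_) (by simpa using hf')
    rw [interior_Icc] at hx ⊢
    exact (hf x (Ioo_subset_Icc_self hx)).mono (Ioo_subset_Icc_self.trans hs)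
  intro x hx
  simpa [ha] using hmono (left_mem_Icc.2 (hx.1.trans_le hx.2).le) (Ioc_subset_Icc_self hx) hx.1

section Constraint

variable {ι : Type*} [Fintype ι] {fc : (ι → ℝ) → ℝ} {n : (ι → ℝ) → ι → ℝ}
  {q v : ℝ → ι → ℝ} {q' a : ι → ℝ} {s : Set ℝ} {τ : ℝ}

lemma HasDerivWithinAt.constraint_comp (hn : ∀ p w, fderiv ℝ fc p w = n p ⬝ᵥ w)
    (hfc : DifferentiableAt ℝ fc (q τ)) (hq : HasDerivWithinAt q q' s τ) :
    HasDerivWithinAt (fun τ => fc (q τ)) (n (q τ) ⬝ᵥ q') s τ := by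
  have hderiv := hfc.hasFDerivAt.comp_hasDerivWithinAt τ hq
  rwa [hn] at hderiv

lemma HasDerivWithinAt.normal_dotProduct (hn : ∀ p w, fderiv ℝ fc p w = n p ⬝ᵥ w)
    (hfc : DifferentiableAt ℝ (fderiv ℝ fc) (q τ)) (hq : HasDerivWithinAt q q' s τ)
    (hv : HasDerivWithinAt v a s τ) :
    HasDerivWithinAt (fun τ => n (q τ) ⬝ᵥ v τ)
      (n (q τ) ⬝ᵥ a + fderiv ℝ (fun p => n p ⬝ᵥ v τ) (q τ) q') s τ := by
  have hnormal : (fun p => n p ⬝ᵥ v τ) = fun p => fderiv ℝ fc p (v τ) :=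
    funext fun p => (hn p (v τ)).symm
  have hsecond :
      fderiv ℝ (fun p => n p ⬝ᵥ v τ) (q τ) q' = fderiv ℝ (fderiv ℝ fc) (q τ) q' (v τ) := by
    rw [hnormal, fderiv_clm_apply hfc (differentiableAt_const (v τ))]
    simp
  have hderiv := (hfc.hasFDerivAt.comp_hasDerivWithinAt τ hq).clm_apply hv
  simp only [Function.comp_def, hn] at hderiv
  rwa [hsecond, add_comm]

end Constraint

theorem stmt_15_general (nq nu : ℕ)
    (fc : (Fin nq → ℝ) → ℝ) (hfc : ContDiff ℝ 2 fc)
    (n : (Fin nq → ℝ) → Fin nq → ℝ)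
    (hn : ∀ p w, fderiv ℝ fc p w = n p ⬝ᵥ w)
    (fv : (Fin nq → ℝ) → (Fin nq → ℝ) → (Fin nu → ℝ) → Fin nq → ℝ)
    (ε₀ : ℝ) (hε₀ : 0 < ε₀)
    (u : ℝ → Fin nu → ℝ)
    (q v : ℝ → Fin nq → ℝ)
    (hq : ∀ τ ∈ Set.Icc 0 ε₀, HasDerivWithinAt q (v τ) (Set.Icc 0 ε₀) τ)
    (hv : ∀ τ ∈ Set.Icc 0 ε₀,
      HasDerivWithinAt v (fv (q τ) (v τ) (u τ)) (Set.Icc 0 ε₀) τ)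
    (hφcont : ContinuousOn
      (fun τ => n (q τ) ⬝ᵥ fv (q τ) (v τ) (u τ) +
        fderiv ℝ (fun p => n p ⬝ᵥ v τ) (q τ) (v τ)) (Set.Icc 0 ε₀))
    (hinit1 : fc (q 0) = 0) (hinit2 : n (q 0) ⬝ᵥ v 0 = 0)
    (hφ0 : 0 < n (q 0) ⬝ᵥ fv (q 0) (v 0) (u 0) +
      fderiv ℝ (fun p => n p ⬝ᵥ v 0) (q 0) (v 0)) :
    ∃ ε ∈ Set.Ioc 0 ε₀, ∀ τ ∈ Set.Ioo 0 ε,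
      0 < n (q τ) ⬝ᵥ v τ ∧ 0 < fc (q τ) := by
  obtain ⟨ε, hε, hφpos⟩ :=
    exists_Ioc_forall_Ico_pos_of_continuousWithinAt hε₀ (hφcont 0 ⟨le_rfl, hε₀.le⟩) hφ0
  have hsub : Icc 0 ε ⊆ Icc 0 ε₀ := Icc_subset_Icc_right hε.2
  have hfc' : Differentiable ℝ (fderiv ℝ fc) :=
    (hfc.fderiv_right (m := 1) (by norm_num)).differentiable one_ne_zero
  have hnormal : ∀ τ ∈ Ioc 0 ε, 0 < n (q τ) ⬝ᵥ v τ :=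
    pos_of_hasDerivWithinAt_pos_of_left_eq_zero hsub
      (fun τ hτ => (hq τ (hsub hτ)).normal_dotProduct hn (hfc' _) (hv τ (hsub hτ)))
      (fun τ hτ => hφpos τ (Ioo_subset_Ico_self hτ)) hinit2
  have hconstraint : ∀ τ ∈ Ioc 0 ε, 0 < fc (q τ) :=
    pos_of_hasDerivWithinAt_pos_of_left_eq_zero hsub
      (fun τ hτ => (hq τ (hsub hτ)).constraint_comp hn (hfc.differentiable (by norm_num) _))
      (fun τ hτ => hnormal τ (Ioo_subset_Ioc_self hτ)) hinit1
  exact ⟨ε, hε, fun τ hτ =>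
    ⟨hnormal τ (Ioo_subset_Ioc_self hτ), hconstraint τ (Ioo_subset_Ioc_self hτ)⟩⟩

/-- Contact breaking: along the unconstrained time-freezing dynamics
`q' = v`, `v' = f_v(q,v,u)`, `t' = 1`, started on the switching surface `Σ`
(`f_c(q(0)) = 0`, `n(q(0))ᵀv(0) = 0`) with `φ(x(0),u(0)) > 0` and
`τ ↦ φ(x(τ),u(τ))` continuous, there exists `ε ∈ (0, ε₀]` such that for all
`τ ∈ (0, ε)` the trajectory satisfies `n(q(τ))ᵀv(τ) > 0` and `f_c(q(τ)) > 0`: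
the contact breaks. -/
theorem stmt_15 (nq nu : ℕ) (hnq : 0 < nq)
    (fc : (Fin nq → ℝ) → ℝ) (hfc : ContDiff ℝ 2 fc)
    (n : (Fin nq → ℝ) → Fin nq → ℝ)
    (hn : ∀ p w, fderiv ℝ fc p w = n p ⬝ᵥ w)
    (fv : (Fin nq → ℝ) → (Fin nq → ℝ) → (Fin nu → ℝ) → Fin nq → ℝ)
    (ε₀ : ℝ) (hε₀ : 0 < ε₀)
    (u : ℝ → Fin nu → ℝ)
    (q v : ℝ → Fin nq → ℝ) (t : ℝ → ℝ)
    (hq : ∀ τ ∈ Set.Icc 0 ε₀, HasDerivWithinAt q (v τ) (Set.Icc 0 ε₀) τ)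
    (hv : ∀ τ ∈ Set.Icc 0 ε₀,
      HasDerivWithinAt v (fv (q τ) (v τ) (u τ)) (Set.Icc 0 ε₀) τ)
    (ht : ∀ τ ∈ Set.Icc 0 ε₀, HasDerivWithinAt t (1 : ℝ) (Set.Icc 0 ε₀) τ)
    (hφcont : ContinuousOn
      (fun τ => n (q τ) ⬝ᵥ fv (q τ) (v τ) (u τ) +
        fderiv ℝ (fun p => n p ⬝ᵥ v τ) (q τ) (v τ)) (Set.Icc 0 ε₀))
    (hinit1 : fc (q 0) = 0) (hinit2 : n (q 0) ⬝ᵥ v 0 = 0)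
    (hφ0 : 0 < n (q 0) ⬝ᵥ fv (q 0) (v 0) (u 0) +
      fderiv ℝ (fun p => n p ⬝ᵥ v 0) (q 0) (v 0)) :
    ∃ ε ∈ Set.Ioc 0 ε₀, ∀ τ ∈ Set.Ioo 0 ε,
      0 < n (q τ) ⬝ᵥ v τ ∧ 0 < fc (q τ) :=
  stmt_15_general nq nu fc hfc n hn fv ε₀ hε₀ u q v hq hv hφcont hinit1 hinit2 hφ0
end
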